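/- Let K be a differential field with field of constants C = Const(K). The right kernel of the Wronskian matrix Wrn(a₁, …, aₙ) of elements a₁, …, aₙ ∈ K, viewed as a K-subspace of K^n, is spanned by vectors with entries in C; i.e., the kernel is defined over the constants. -/

import Mathlib

/-!
Write `r m = Dᵐ a` for the `m`-th row of `Wrn(a)`. The spans `span {r 0, …, r (k-1)}` increase
with `k`, and once `r k` falls into the span so does every later row; by dimension this happens
for some `k ≤ n`. A kernel vector `v` is therefore orthogonal to every `r m`, and the Leibniz rule
`D (r m ⬝ᵥ v) = r (m+1) ⬝ᵥ v + r m ⬝ᵥ D v` shows that `D v` is again in the kernel.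

A `D`-stable subspace `V ⊆ K^ι` is spanned by constant vectors: take a minimal set `P` of
coordinates that determines the vectors of `V`, and for `s ∈ P` a vector `e s ∈ V` whose
restriction to `P` is the indicator of `s`. Then `D (e s) ∈ V` vanishes on `P`, so `e s` is
constant, and every `v ∈ V` equals `∑ s ∈ P, v s • e s`.
-/

open Matrix Submodule

namespace Derivation

section IterateSpan

variable {R K ι : Type*} [CommRing R] [Field K] [Algebra R K] (D : Derivation R K K)

lemma comp_smul (c : K) (x : ι → K) : ⇑D ∘ (c • x) = D c • x + c • (⇑D ∘ x) := by
  ext j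
  simp [leibniz, mul_comm, add_comm]

lemma map_dotProduct [Fintype ι] (x y : ι → K) :
    D (x ⬝ᵥ y) = (⇑D ∘ x) ⬝ᵥ y + x ⬝ᵥ (⇑D ∘ y) := by
  simp [dotProduct, ← Finset.sum_add_distrib, leibniz, add_comm, mul_comm]

def iterateSpan (a : ι → K) (k : ℕ) : Submodule K (ι → K) :=
  span K ((fun i => (⇑D)^[i] ∘ a) '' Set.Iio k)

lemma iterateSpan_mono (a : ι → K) : Monotone (D.iterateSpan a) := fun _ _ hkl =>
  span_mono (Set.image_mono (Set.Iio_subset_Iio hkl))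

lemma comp_mem_iterateSpan_succ {a x : ι → K} {k : ℕ} (hx : x ∈ D.iterateSpan a k) :
    ⇑D ∘ x ∈ D.iterateSpan a (k + 1) := by
  induction hx using span_induction with
  | mem x hx =>
    obtain ⟨i, hi, rfl⟩ := hx
    refine subset_span ⟨i + 1, Nat.succ_lt_succ hi, ?_⟩
    simp only [Function.iterate_succ', Function.comp_assoc]
  | zero => convert (D.iterateSpan a (k + 1)).zero_mem using 1; ext; simp
  | add x y _ _ hx hy => convert add_mem hx hy using 1; ext; simp
  | smul c x hx' hx =>
    rw [D.comp_smul]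
    exact add_mem (smul_mem _ _ (D.iterateSpan_mono a k.le_succ hx')) (smul_mem _ _ hx)

lemma iterate_add_mem_iterateSpan {a : ι → K} {k : ℕ}
    (hk : (⇑D)^[k] ∘ a ∈ D.iterateSpan a k) (j : ℕ) :
    (⇑D)^[k + j] ∘ a ∈ D.iterateSpan a k := by
  have hstable : D.iterateSpan a (k + 1) ≤ D.iterateSpan a k := by
    refine span_le.mpr ?_
    rintro _ ⟨i, hi, rfl⟩
    rcases Nat.lt_succ_iff_lt_or_eq.mp hi with hi | rfl
    · exact subset_span ⟨i, hi, rfl⟩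
    · exact hk
  induction j with
  | zero => exact hk
  | succ j ih =>
    rw [← add_assoc, Function.iterate_succ', Function.comp_assoc]
    exact hstable (D.comp_mem_iterateSpan_succ ih)

lemma exists_iterate_mem_iterateSpan [Fintype ι] (a : ι → K) :
    ∃ k ≤ Fintype.card ι, (⇑D)^[k] ∘ a ∈ D.iterateSpan a k := by
  by_contra! h
  have hindep : ∀ k ≤ Fintype.card ι + 1,
      LinearIndepOn K (fun i => (⇑D)^[i] ∘ a) (Set.Iio k) := by
    intro k hk
    induction k with
    | zero => simp
    | succ k ih =>
      have hIio : Set.Iio (k + 1) = insert k (Set.Iio k) := by ext; simp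
      rw [hIio, linearIndepOn_insert Set.self_notMem_Iio]
      exact ⟨ih (by omega), h k (by omega)⟩
  have := (hindep _ le_rfl).fintype_card_le_finrank
  simp at this

lemma iterate_mem_iterateSpan_card [Fintype ι] (a : ι → K) (m : ℕ) :
    (⇑D)^[m] ∘ a ∈ D.iterateSpan a (Fintype.card ι) := by
  obtain ⟨k, hk, hmem⟩ := D.exists_iterate_mem_iterateSpan a
  rcases lt_or_ge m k with hm | hm
  · exact D.iterateSpan_mono a hk (subset_span ⟨m, hm, rfl⟩)
  · obtain ⟨j, rfl⟩ := Nat.exists_eq_add_of_le hm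
    exact D.iterateSpan_mono a hk (D.iterate_add_mem_iterateSpan hmem j)

end IterateSpan

section Wronskian

variable {R K : Type*} [CommRing R] [Field K] [Algebra R K] (D : Derivation R K K) {n : ℕ}

def wronskian (a : Fin n → K) : Matrix (Fin n) (Fin n) K :=
  Matrix.of fun i j => (⇑D)^[i] (a j)

lemma wronskian_mulVec_eq_zero_iff {a v : Fin n → K} :
    D.wronskian a *ᵥ v = 0 ↔ ∀ m : ℕ, ((⇑D)^[m] ∘ a) ⬝ᵥ v = 0 := by
  refine ⟨fun hv m => ?_, fun h => funext fun i => h i⟩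
  have hspan : D.iterateSpan a n ≤ LinearMap.ker ((dotProductBilin K K).flip v) := by
    refine span_le.mpr ?_
    rintro _ ⟨i, hi, rfl⟩
    exact congrFun hv ⟨i, hi⟩
  simpa using hspan (by simpa using D.iterate_mem_iterateSpan_card a m)

lemma wronskian_mulVec_comp_eq_zero {a v : Fin n → K} (hv : D.wronskian a *ᵥ v = 0) :
    D.wronskian a *ᵥ (⇑D ∘ v) = 0 := by
  rw [wronskian_mulVec_eq_zero_iff] at hv ⊢
  intro m
  have := D.map_dotProduct ((⇑D)^[m] ∘ a) v
  rwa [hv, map_zero, ← Function.comp_assoc, ← Function.iterate_succ', hv, zero_add,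
    eq_comm] at this

end Wronskian

end Derivation

namespace Submodule

variable {K ι : Type*} [Field K] [Fintype ι]

theorem exists_pivots [DecidableEq ι] (V : Submodule K (ι → K)) :
    ∃ (P : Finset ι) (e : ι → ι → K), (∀ s ∈ P, e s ∈ V) ∧
      (∀ s ∈ P, ∀ t ∈ P, e s t = (Pi.single s 1 : ι → K) t) ∧
        ∀ v ∈ V, v = ∑ s ∈ P, v s • e s := by
  obtain ⟨P, hP⟩ := exists_minimal_of_wellFoundedLT
    (fun S : Finset ι => ∀ v ∈ V, (∀ s ∈ S, v s = 0) → v = 0)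
    ⟨Finset.univ, fun v _ h => funext fun s => h s (Finset.mem_univ s)⟩
  have hpivot : ∀ s ∈ P, ∃ e ∈ V, ∀ t ∈ P, e t = (Pi.single s 1 : ι → K) t := by
    intro s hs
    have := hP.not_prop_of_lt (Finset.erase_ssubset hs)
    push Not at this
    obtain ⟨e, he, hzero, hne⟩ := this
    have hes : e s ≠ 0 := fun hes => hne <| hP.prop e he fun t ht => by
      rcases eq_or_ne t s with rfl | hts
      · exact hes
      · exact hzero t (Finset.mem_erase.mpr ⟨hts, ht⟩)
    refine ⟨(e s)⁻¹ • e, V.smul_mem _ he, fun t ht => ?_⟩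
    rcases eq_or_ne t s with rfl | hts
    · simp [hes]
    · simp [hts, hzero t (Finset.mem_erase.mpr ⟨hts, ht⟩)]
  choose! e heV he using hpivot
  refine ⟨P, e, heV, he, fun v hv => ?_⟩
  refine sub_eq_zero.mp (hP.prop _ (sub_mem hv (sum_mem fun s hs => V.smul_mem _ (heV s hs)))
    fun t ht => ?_)
  have hcoord : ∑ s ∈ P, v s * e s t = v t := by
    rw [Finset.sum_congr rfl fun s hs => by rw [he s hs t ht]]
    simp [Pi.single_apply, ht]
  simp [Finset.sum_apply, hcoord]

theorem le_span_constants_of_comp_mem {R : Type*} [CommRing R] [Algebra R K]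
    (D : Derivation R K K) (V : Submodule K (ι → K)) (hV : ∀ v ∈ V, ⇑D ∘ v ∈ V) :
    V ≤ span K {w | w ∈ V ∧ ∀ i, D (w i) = 0} := by
  classical
  obtain ⟨P, e, heV, he, hrep⟩ := V.exists_pivots
  have hconst : ∀ s ∈ P, ∀ i, D (e s i) = 0 := by
    intro s hs
    refine congrFun ((hrep _ (hV _ (heV s hs))).trans (Finset.sum_eq_zero fun t ht => ?_))
    rw [Function.comp_apply, he s hs t ht, Pi.single_apply]
    split_ifs <;> simp
  intro v hv
  rw [hrep v hv]
  exact sum_mem fun s hs => smul_mem _ _ (subset_span ⟨heV s hs, hconst s hs⟩)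

end Submodule

/-- The right kernel of a Wronskian matrix is defined over the constants: it is spanned
by kernel vectors all of whose entries are constants. -/
theorem wronskian_kernel_defined_over_constants
    {K : Type*} [Field K] (δ : K → K)
    (hadd : ∀ x y, δ (x + y) = δ x + δ y)
    (hmul : ∀ x y, δ (x * y) = δ x * y + x * δ y)
    (n : ℕ) (a : Fin n → K) (v : Fin n → K)
    (hv : (Matrix.of fun i j : Fin n => δ^[(i : ℕ)] (a j)).mulVec v = 0) :
    v ∈ Submodule.span K
      {w : Fin n → K |
        (Matrix.of fun i j : Fin n => δ^[(i : ℕ)] (a j)).mulVec w = 0 ∧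
          ∀ i, δ (w i) = 0} := by
  let D : Derivation ℤ K K :=
    Derivation.mk' (AddMonoidHom.mk' δ hadd).toIntLinearMap fun x y => by
      simp [hmul, mul_comm, add_comm]
  exact (LinearMap.ker (D.wronskian a).mulVecLin).le_span_constants_of_comp_mem D
    (fun w hw => D.wronskian_mulVec_comp_eq_zero hw) hv
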